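/- Suppose the set of inverse Nash equilibria of an inverse game (G \ θ*, x̂) is nonempty. Then a parameter θ ∈ Θ is an inverse Nash equilibrium (i.e., x̂ is a Nash equilibrium of G_θ) if and only if θ minimizes over Θ the function θ ↦ max_{y ∈ X} Σ_i [u_i(y_i, x̂_{-i}; θ) - u_i(x̂; θ)], and the minimum value is zero. -/

import Mathlib

/-- `θ` is an inverse Nash equilibrium: the observed profile `xhat` is a Nash equilibrium of
the game with payoffs `u · (·; θ)`. -/
def IsInverseNash {N : ℕ} {E Θ : Type*} (X : Fin N → Set E)
    (u : Fin N → (Fin N → E) → Θ → ℝ) (xhat : Fin N → E) (θ : Θ) : Prop :=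
  ∀ i, ∀ yᵢ ∈ X i, u i (Function.update xhat i yᵢ) θ ≤ u i xhat θ

/-!
Exploitability is the largest total gain from unilateral deviations against `xhat`. Taking
`y = xhat` shows it is nonnegative, and it is zero exactly at equilibria, because a single
player's deviation is itself a feasible profile whose total gain is that player's gain alone.
As some parameter is an equilibrium, `0` is the attained minimum and the minimizers are exactly
the zeros, i.e. the inverse Nash equilibria.
-/

open Function

section DeviationGain

variable {ι E : Type*} [Fintype ι] [DecidableEq ι]

lemma sum_update_self_sub (v : ι → (ι → E) → ℝ) (x : ι → E) :
    ∑ i, (v i (update x i (x i)) - v i x) = 0 := by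
  simp

lemma sum_update_update_sub (v : ι → (ι → E) → ℝ) (x : ι → E) (i : ι) (a : E) :
    ∑ j, (v j (update x j (update x i a j)) - v j x) = v i (update x i a) - v i x := by
  rw [Finset.sum_eq_single i (fun j _ hji => by simp [update_of_ne hji]) (by simp), update_self]

end DeviationGain

lemma forall_le_iff_eq_of_forall_le {Θ α : Type*} [PartialOrder α] {f : Θ → α} {a : α}
    {θ₀ : Θ} (hf : ∀ θ, a ≤ f θ) (hθ₀ : f θ₀ = a) (θ : Θ) :
    (∀ θ', f θ ≤ f θ') ↔ f θ = a :=
  ⟨fun hmin => le_antisymm (hθ₀ ▸ hmin θ₀) (hf θ), fun h θ' => h ▸ hf θ'⟩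

lemma isLeast_range_of_forall_le {Θ α : Type*} [Preorder α] {f : Θ → α} {a : α} {θ₀ : Θ}
    (hf : ∀ θ, a ≤ f θ) (hθ₀ : f θ₀ = a) : IsLeast (Set.range f) a :=
  ⟨⟨θ₀, hθ₀⟩, by rintro _ ⟨θ, rfl⟩; exact hf θ⟩

section Exploitability

variable {N : ℕ} {E Θ : Type*} {X : Fin N → Set E} {u : Fin N → (Fin N → E) → Θ → ℝ}
  {xhat : Fin N → E} {θ : Θ} {e : ℝ}

def totalDeviationGain (u : Fin N → (Fin N → E) → Θ → ℝ) (xhat : Fin N → E) (θ : Θ)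
    (y : Fin N → E) : ℝ :=
  ∑ i, (u i (update xhat i (y i)) θ - u i xhat θ)

lemma update_mem_profiles (hxhat : ∀ i, xhat i ∈ X i) {i : Fin N} {a : E} (ha : a ∈ X i) :
    update xhat i a ∈ {y : Fin N → E | ∀ j, y j ∈ X j} :=
  forall_update_iff xhat (p := fun j b => b ∈ X j) |>.2 ⟨ha, fun j _ => hxhat j⟩

lemma exploitability_nonneg (hxhat : ∀ i, xhat i ∈ X i)
    (he : IsGreatest (totalDeviationGain u xhat θ '' {y | ∀ i, y i ∈ X i}) e) : 0 ≤ e := by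
  have hgain : totalDeviationGain u xhat θ xhat = 0 :=
    sum_update_self_sub (fun i x => u i x θ) xhat
  exact hgain ▸ he.2 ⟨xhat, hxhat, rfl⟩

lemma IsInverseNash.totalDeviationGain_nonpos (hNash : IsInverseNash X u xhat θ)
    {y : Fin N → E} (hy : ∀ i, y i ∈ X i) : totalDeviationGain u xhat θ y ≤ 0 :=
  Finset.sum_nonpos fun i _ => sub_nonpos.2 (hNash i (y i) (hy i))

lemma isInverseNash_iff_exploitability_eq_zero (hxhat : ∀ i, xhat i ∈ X i)
    (he : IsGreatest (totalDeviationGain u xhat θ '' {y | ∀ i, y i ∈ X i}) e) :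
    IsInverseNash X u xhat θ ↔ e = 0 := by
  refine ⟨fun hNash => le_antisymm ?_ (exploitability_nonneg hxhat he), fun he0 i a ha => ?_⟩
  · obtain ⟨y, hy, rfl⟩ := he.1
    exact hNash.totalDeviationGain_nonpos hy
  · have hgain : totalDeviationGain u xhat θ (update xhat i a) =
        u i (update xhat i a) θ - u i xhat θ :=
      sum_update_update_sub (fun i x => u i x θ) xhat i a
    have hle := he.2 ⟨_, update_mem_profiles hxhat ha, rfl⟩
    rw [hgain, he0] at hle
    exact sub_nonpos.1 hle

end Exploitability

/-- If the set of inverse Nash equilibria of the inverse game is nonempty, then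
`θ` is an inverse Nash equilibrium iff `θ` minimizes the exploitability function
`θ ↦ max_{y ∈ X} ∑ i (u i (yᵢ, xhat₋ᵢ; θ) - u i (xhat; θ))`, and the minimum value is zero.
The per-parameter maximum is assumed attained, encoded by `IsGreatest` into `expl θ`. -/
theorem inverseNash_iff_minimizes_exploitability {N : ℕ} {E Θ : Type*}
    (X : Fin N → Set E) (u : Fin N → (Fin N → E) → Θ → ℝ)
    (xhat : Fin N → E) (hxhat : ∀ i, xhat i ∈ X i)
    (expl : Θ → ℝ)
    (hexpl : ∀ θ : Θ, IsGreatest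
      ((fun y : Fin N → E =>
          ∑ i, (u i (Function.update xhat i (y i)) θ - u i xhat θ)) ''
        {y : Fin N → E | ∀ i, y i ∈ X i}) (expl θ))
    (hne : ∃ θ₀ : Θ, IsInverseNash X u xhat θ₀) :
    (∀ θ : Θ, IsInverseNash X u xhat θ ↔ ∀ θ' : Θ, expl θ ≤ expl θ') ∧
      IsLeast (Set.range expl) 0 := by
  have hnonneg (θ : Θ) : 0 ≤ expl θ := exploitability_nonneg hxhat (hexpl θ)
  have hzero (θ : Θ) : IsInverseNash X u xhat θ ↔ expl θ = 0 :=
    isInverseNash_iff_exploitability_eq_zero hxhat (hexpl θ)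
  obtain ⟨θ₀, hθ₀⟩ := hne
  have hθ₀ : expl θ₀ = 0 := (hzero θ₀).1 hθ₀
  exact ⟨fun θ => (hzero θ).trans (forall_le_iff_eq_of_forall_le hnonneg hθ₀ θ).symm,
    isLeast_range_of_forall_le hnonneg hθ₀⟩
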